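/- arXiv:2504.19859 — 3 statements merged into one kernel-verified Lean document; each statement's English description precedes it below -/
import Mathlib

section
/- Let L be an even positive integer and h(x,y) = 1 + x^{L+2} + y^{L+2} on ℝ × [0,∞). For the degenerate operator ℒ = (y/2)(λ²∂²_x + 2ρλσ∂_x∂_y + σ²∂²_y) + (c+dy)∂_x + (a−by)∂_y, there exists a constant M > 0 such that ℒh(x,y) < M·h(x,y) for all (x,y) ∈ ℝ × [0,∞). -/
/-- Monomial domination: if `p + q ≤ n` then `u^p * v^q ≤ 1 + u^n + v^n` for `u, v ≥ 0`. -/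
lemma mono_dom (u v : ℝ) (hu : 0 ≤ u) (hv : 0 ≤ v) {p q n : ℕ} (hpq : p + q ≤ n) :
    u ^ p * v ^ q ≤ 1 + u ^ n + v ^ n := by
  have hmu : u ≤ max 1 (max u v) := le_trans (le_max_left u v) (le_max_right _ _)
  have hmv : v ≤ max 1 (max u v) := le_trans (le_max_right u v) (le_max_right _ _)
  have hm1 : (1:ℝ) ≤ max 1 (max u v) := le_max_left _ _
  have h0m : (0:ℝ) ≤ max 1 (max u v) := by linarith
  have h1 : u ^ p * v ^ q ≤ (max 1 (max u v)) ^ p * (max 1 (max u v)) ^ q :=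
    mul_le_mul (pow_le_pow_left₀ hu hmu p) (pow_le_pow_left₀ hv hmv q)
      (pow_nonneg hv q) (pow_nonneg h0m p)
  have h2 : (max 1 (max u v)) ^ p * (max 1 (max u v)) ^ q
      = (max 1 (max u v)) ^ (p + q) := (pow_add _ p q).symm
  have h3 : (max 1 (max u v)) ^ (p + q) ≤ (max 1 (max u v)) ^ n :=
    pow_le_pow_right₀ hm1 hpq
  have h4 : (max 1 (max u v)) ^ n ≤ 1 + u ^ n + v ^ n := by
    rcases max_choice 1 (max u v) with h | h
    · rw [h, one_pow]
      nlinarith [pow_nonneg hu n, pow_nonneg hv n]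
    · rcases max_choice u v with h' | h' <;> rw [h, h'] <;>
        nlinarith [pow_nonneg hu n, pow_nonneg hv n]
  linarith

/-- For the degenerate log-Heston operator ℒ and
`h(x,y) = 1 + x^(L+2) + y^(L+2)` with `L` even and positive, there is `M > 0`
with `ℒh(x,y) < M·h(x,y)` on `ℝ × [0,∞)`. Here `ℒh` is given explicitly. -/
theorem stmt0 (a lam sig b c d ρ : ℝ) (ha : 0 < a) (hlam : 0 < lam) (hsig : 0 < sig)
    (hρ : -1 < ρ ∧ ρ < 1) (L : ℕ) (hL : Even L) (hLpos : 0 < L) :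
    ∃ M : ℝ, 0 < M ∧ ∀ x y : ℝ, 0 ≤ y →
      ((L : ℝ) + 2) * ((L : ℝ) + 1) / 2 * y * (lam ^ 2 * x ^ L + sig ^ 2 * y ^ L)
        + ((L : ℝ) + 2) * ((c + d * y) * x ^ (L + 1) + (a - b * y) * y ^ (L + 1))
      < M * (1 + x ^ (L + 2) + y ^ (L + 2)) := by
  set A : ℝ := ((L : ℝ) + 2) * ((L : ℝ) + 1) / 2 with hAdef
  set B : ℝ := (L : ℝ) + 2 with hBdef
  have hA : (0:ℝ) ≤ A := by positivity
  have hB : (0:ℝ) ≤ B := by positivity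
  refine ⟨A * (lam ^ 2 + sig ^ 2) + B * (|c| + |d| + |a| + |b|) + 1, by positivity, ?_⟩
  intro x y hy
  have hxa : (0:ℝ) ≤ |x| := abs_nonneg x
  have hL2 : Even (L + 2) := hL.add even_two
  have hxL : x ^ L = |x| ^ L := (hL.pow_abs x).symm
  have hx2 : x ^ (L + 2) = |x| ^ (L + 2) := (hL2.pow_abs x).symm
  set H : ℝ := 1 + |x| ^ (L + 2) + y ^ (L + 2) with hHdef
  have hH1 : (1:ℝ) ≤ H := by
    have := pow_nonneg hxa (L + 2)
    have := pow_nonneg hy (L + 2)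
    simp only [hHdef]; linarith
  -- key monomial bounds
  have k1 : |x| ^ L * y ≤ H := by
    have := mono_dom |x| y hxa hy (p := L) (q := 1) (n := L + 2) (by omega)
    simpa [pow_one] using this
  have k2 : y ^ (L + 1) ≤ H := by
    have := mono_dom |x| y hxa hy (p := 0) (q := L + 1) (n := L + 2) (by omega)
    simpa using this
  have k3 : |x| ^ (L + 1) ≤ H := by
    have := mono_dom |x| y hxa hy (p := L + 1) (q := 0) (n := L + 2) (by omega)
    simpa using this
  have k4 : |x| ^ (L + 1) * y ≤ H := by
    have := mono_dom |x| y hxa hy (p := L + 1) (q := 1) (n := L + 2) (by omega)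
    simpa [pow_one] using this
  have k5 : y ^ (L + 2) ≤ H := by
    have := pow_nonneg hxa (L + 2)
    simp only [hHdef]; linarith
  -- scaled bounds
  have g1 : A * lam ^ 2 * (y * x ^ L) ≤ A * lam ^ 2 * H := by
    apply mul_le_mul_of_nonneg_left _ (by positivity)
    rw [hxL, mul_comm]; exact k1
  have g2 : A * sig ^ 2 * (y * y ^ L) ≤ A * sig ^ 2 * H := by
    apply mul_le_mul_of_nonneg_left _ (by positivity)
    calc y * y ^ L = y ^ (L + 1) := by ring
    _ ≤ H := k2
  have g3 : B * (c * x ^ (L + 1)) ≤ B * (|c| * H) := by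
    apply mul_le_mul_of_nonneg_left _ hB
    calc c * x ^ (L + 1) ≤ |c * x ^ (L + 1)| := le_abs_self _
    _ = |c| * |x| ^ (L + 1) := by rw [abs_mul, abs_pow]
    _ ≤ |c| * H := mul_le_mul_of_nonneg_left k3 (abs_nonneg c)
  have g4 : B * (d * y * x ^ (L + 1)) ≤ B * (|d| * H) := by
    apply mul_le_mul_of_nonneg_left _ hB
    calc d * y * x ^ (L + 1) ≤ |d * y * x ^ (L + 1)| := le_abs_self _
    _ = |d| * (|x| ^ (L + 1) * y) := by
        rw [abs_mul, abs_mul, abs_pow, abs_of_nonneg hy]; ring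
    _ ≤ |d| * H := mul_le_mul_of_nonneg_left k4 (abs_nonneg d)
  have g5 : B * (a * y ^ (L + 1)) ≤ B * (|a| * H) := by
    apply mul_le_mul_of_nonneg_left _ hB
    calc a * y ^ (L + 1) ≤ |a * y ^ (L + 1)| := le_abs_self _
    _ = |a| * y ^ (L + 1) := by rw [abs_mul, abs_of_nonneg (pow_nonneg hy _)]
    _ ≤ |a| * H := mul_le_mul_of_nonneg_left k2 (abs_nonneg a)
  have g6 : B * (-(b * y * y ^ (L + 1))) ≤ B * (|b| * H) := by
    apply mul_le_mul_of_nonneg_left _ hB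
    calc -(b * y * y ^ (L + 1)) ≤ |b * y * y ^ (L + 1)| := neg_le_abs _
    _ = |b| * (y * y ^ (L + 1)) := by
        rw [abs_mul, abs_mul, abs_of_nonneg hy, abs_of_nonneg (pow_nonneg hy _)]; ring
    _ ≤ |b| * y ^ (L + 2) := by
        apply mul_le_mul_of_nonneg_left _ (abs_nonneg b)
        apply le_of_eq; ring
    _ ≤ |b| * H := mul_le_mul_of_nonneg_left k5 (abs_nonneg b)
  rw [hx2, ← hHdef]
  nlinarith [g1, g2, g3, g4, g5, g6, hH1,
    mul_le_mul_of_nonneg_left hH1 hA, mul_le_mul_of_nonneg_left hH1 hB]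
end

section
/- Suppose u : [0,T] × ℝ × [0,∞) → ℝ has ∂_y u continuous up to the boundary {y = 0}, and suppose that for y > 0 it holds ∂_t u = −(ℒ + ϱ)u + h, where moreover y∂²_y u(t,x,y) → 0 and y∂_x∂_y u(t,x,y) → 0 as (t,x,y) → (t₀,x₀,0), and ∂_x u, ∂_y u extend continuously to {y=0}. Then for all t ∈ [0,T), x ∈ ℝ, the equation ∂_t u(t,x,0) + (c∂_x + a∂_y + ϱ)u(t,x,0) = h(t,x,0) holds pointwise on the boundary. -/
/-!
Fix `t`. Solving the equation for its `∂²ₓ` term shows that `y ∂²ₓu(t, x, y)` tends to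
`L = (2/λ²)(h - ∂ₜu - c∂ₓu - a∂ᵧu - ϱu)(t, x₀, 0)` as `(x, y) → (x₀, 0⁺)`: every other term
converges, and `y∂²ᵧu`, `y∂ₓ∂ᵧu` vanish. If `L ≠ 0`, then by the mean value theorem `∂ₓu(t, ·, y)`
changes by about `2rL/y` across `[x₀ - r, x₀ + r]`, which is impossible for small `y` since `∂ₓu`
stays bounded near `(t, x₀, 0)`.
-/

open Set Filter

/-- The degenerate log-Heston operator applied to a function `v` of `(x,y)`. -/
noncomputable def Lop (a b c d lam sig ρ : ℝ) (v : ℝ → ℝ → ℝ) (x y : ℝ) : ℝ :=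
  y / 2 * (lam ^ 2 * deriv (fun x' => deriv (fun x'' => v x'' y) x') x
      + 2 * ρ * lam * sig * deriv (fun x' => deriv (fun y' => v x' y') y) x
      + sig ^ 2 * deriv (fun y' => deriv (fun y'' => v x y'') y') y)
    + (c + d * y) * deriv (fun x' => v x' y) x
    + (a - b * y) * deriv (fun y' => v x y') y

open Topology

/-- `f` is differentiable on `[p, q]` for free: where it is not, `deriv f = 0 < m`. -/
lemma mul_sub_le_sub_of_pos_le_deriv {f : ℝ → ℝ} {p q m : ℝ} (hpq : p ≤ q) (hm : 0 < m)
    (hf : ∀ x ∈ Icc p q, m ≤ deriv f x) : m * (q - p) ≤ f q - f p := by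
  have hdiff : ∀ x ∈ Icc p q, DifferentiableAt ℝ f x := fun x hx =>
    differentiableAt_of_deriv_ne_zero (hm.trans_le (hf x hx)).ne'
  exact (convex_Icc p q).mul_sub_le_image_sub_of_le_deriv
    (fun x hx => (hdiff x hx).continuousAt.continuousWithinAt)
    (fun x hx => (hdiff x (interior_subset hx)).differentiableWithinAt)
    (fun x hx => hf x (interior_subset hx)) p (left_mem_Icc.2 hpq) q (right_mem_Icc.2 hpq) hpq

lemma nonpos_of_tendsto_mul_deriv_deriv {v : ℝ → ℝ → ℝ} {x₀ L M : ℝ}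
    (hbdd : ∀ᶠ q in 𝓝 x₀ ×ˢ 𝓝[>] 0, |deriv (fun x => v x q.2) q.1| ≤ M)
    (hlim : Tendsto (fun q : ℝ × ℝ => q.2 * deriv (fun x => deriv (fun x' => v x' q.2) x) q.1)
      (𝓝 x₀ ×ˢ 𝓝[>] 0) (𝓝 L)) :
    L ≤ 0 := by
  by_contra! hL
  obtain ⟨P, hP, Q, hQ, hPQ⟩ :=
    eventually_prod_iff.1 (hbdd.and (hlim.eventually (lt_mem_nhds (half_lt_self hL))))
  obtain ⟨ε, hε, hεP⟩ := Metric.eventually_nhds_iff.1 hP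
  set r := ε / 2 with hr_def
  have hr : 0 < r := half_pos hε
  have hsmall : ∀ᶠ y in 𝓝[>] (0 : ℝ), 2 * M * y < L * r := by
    have h0 : Tendsto (fun y : ℝ => 2 * M * y) (𝓝[>] 0) (𝓝 0) :=
      ((continuous_const_mul (2 * M)).tendsto' 0 0 (mul_zero _)).mono_left nhdsWithin_le_nhds
    exact h0.eventually_lt_const (mul_pos hL hr)
  obtain ⟨y, hyQ, (hy : 0 < y), hyr⟩ := (hQ.and (eventually_mem_nhdsWithin.and hsmall)).exists
  have hstrip : ∀ x ∈ Icc (x₀ - r) (x₀ + r),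
      |deriv (fun x => v x y) x| ≤ M ∧
        L / 2 < y * deriv (fun x => deriv (fun x' => v x' y) x) x := by
    intro x hx
    refine hPQ (hεP ?_) hyQ
    rw [Real.dist_eq, abs_lt]
    constructor <;> linarith [hx.1, hx.2, hr_def]
  have hslope : L / (2 * y) * ((x₀ + r) - (x₀ - r))
      ≤ deriv (fun x => v x y) (x₀ + r) - deriv (fun x => v x y) (x₀ - r) := by
    refine mul_sub_le_sub_of_pos_le_deriv (by linarith) (by positivity) fun x hx => ?_
    rw [div_le_iff₀ (by positivity)]
    linarith [(hstrip x hx).2]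
  have hleft := abs_le.1 (hstrip _ (left_mem_Icc.2 (by linarith))).1
  have hright := abs_le.1 (hstrip _ (right_mem_Icc.2 (by linarith))).1
  have hgrowth : L / (2 * y) * ((x₀ + r) - (x₀ - r)) * y = L * r := by
    field_simp; ring
  nlinarith

lemma eq_zero_of_tendsto_mul_deriv_deriv {v : ℝ → ℝ → ℝ} {x₀ L M : ℝ}
    (hbdd : ∀ᶠ q in 𝓝 x₀ ×ˢ 𝓝[>] 0, |deriv (fun x => v x q.2) q.1| ≤ M)
    (hlim : Tendsto (fun q : ℝ × ℝ => q.2 * deriv (fun x => deriv (fun x' => v x' q.2) x) q.1)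
      (𝓝 x₀ ×ˢ 𝓝[>] 0) (𝓝 L)) :
    L = 0 := by
  refine le_antisymm (nonpos_of_tendsto_mul_deriv_deriv hbdd hlim) (neg_nonpos.1 ?_)
  refine nonpos_of_tendsto_mul_deriv_deriv (v := fun x y => -v x y) (x₀ := x₀) (M := M) ?_ ?_
  · simpa only [deriv.fun_neg, abs_neg] using hbdd
  · simpa only [deriv.fun_neg, mul_neg] using hlim.neg

lemma tendsto_slice_nhdsWithin {s : Set ℝ} {t x₀ : ℝ} (ht : t ∈ s) :
    Tendsto (fun q : ℝ × ℝ => (t, q.1, q.2)) (𝓝 x₀ ×ˢ 𝓝[>] 0)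
      (𝓝[s ×ˢ (univ ×ˢ Ioi 0)] (t, x₀, 0)) := by
  refine tendsto_nhdsWithin_iff.2 ⟨?_, ?_⟩
  · rw [← nhdsWithin_univ x₀, ← nhdsWithin_prod_eq]
    exact ((Continuous.prodMk_right t).tendsto' (x₀, 0) _ rfl).mono_left nhdsWithin_le_nhds
  · filter_upwards [prod_mem_prod univ_mem self_mem_nhdsWithin] with q hq
    exact ⟨ht, mem_univ _, hq.2⟩

theorem stmt3_general (T a lam sig b c d ρ ϱ : ℝ) (hlam : 0 < lam)
    (u h : ℝ → ℝ → ℝ → ℝ)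
    (hu_cont : ContinuousOn (fun p : ℝ × ℝ × ℝ => u p.1 p.2.1 p.2.2)
      (Ico 0 T ×ˢ ((univ : Set ℝ) ×ˢ Ici 0)))
    (hut_cont : ContinuousOn (fun p : ℝ × ℝ × ℝ => deriv (fun s => u s p.2.1 p.2.2) p.1)
      (Ico 0 T ×ˢ ((univ : Set ℝ) ×ˢ Ici 0)))
    (hh_cont : ContinuousOn (fun p : ℝ × ℝ × ℝ => h p.1 p.2.1 p.2.2)
      (Ico 0 T ×ˢ ((univ : Set ℝ) ×ˢ Ici 0)))
    (hux_cont : ContinuousOn (fun p : ℝ × ℝ × ℝ => deriv (fun x' => u p.1 x' p.2.2) p.2.1)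
      (Ico 0 T ×ˢ ((univ : Set ℝ) ×ˢ Ici 0)))
    (huy_cont : ContinuousOn (fun p : ℝ × ℝ × ℝ => deriv (fun y' => u p.1 p.2.1 y') p.2.2)
      (Ico 0 T ×ˢ ((univ : Set ℝ) ×ˢ Ici 0)))
    (hpde : ∀ t ∈ Ico 0 T, ∀ x y : ℝ, 0 < y →
      deriv (fun s => u s x y) t
        = -(Lop a b c d lam sig ρ (fun x' y' => u t x' y') x y + ϱ * u t x y) + h t x y)
    (hlim_yy : ∀ t₀ ∈ Ico 0 T, ∀ x₀ : ℝ,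
      Tendsto (fun p : ℝ × ℝ × ℝ =>
          p.2.2 * deriv (fun y' => deriv (fun y'' => u p.1 p.2.1 y'') y') p.2.2)
        (nhdsWithin (t₀, x₀, 0) (Ico 0 T ×ˢ ((univ : Set ℝ) ×ˢ Ioi 0))) (nhds 0))
    (hlim_xy : ∀ t₀ ∈ Ico 0 T, ∀ x₀ : ℝ,
      Tendsto (fun p : ℝ × ℝ × ℝ =>
          p.2.2 * deriv (fun x' => deriv (fun y' => u p.1 x' y') p.2.2) p.2.1)
        (nhdsWithin (t₀, x₀, 0) (Ico 0 T ×ˢ ((univ : Set ℝ) ×ˢ Ioi 0))) (nhds 0)) :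
    ∀ t ∈ Ico 0 T, ∀ x : ℝ,
      deriv (fun s => u s x 0) t
        + (c * deriv (fun x' => u t x' 0) x + a * deriv (fun y' => u t x y') 0 + ϱ * u t x 0)
      = h t x 0 := by
  intro t ht x₀
  have hz : (t, x₀, (0 : ℝ)) ∈ Ico 0 T ×ˢ ((univ : Set ℝ) ×ˢ Ici 0) :=
    ⟨ht, mem_univ _, self_mem_Ici⟩
  have hbdry : ∀ {f : ℝ × ℝ × ℝ → ℝ}, ContinuousOn f (Ico 0 T ×ˢ ((univ : Set ℝ) ×ˢ Ici 0)) →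
      Tendsto f (𝓝[Ico 0 T ×ˢ ((univ : Set ℝ) ×ˢ Ioi 0)] (t, x₀, 0)) (𝓝 (f (t, x₀, 0))) :=
    fun hf => (hf _ hz).mono_left (nhdsWithin_mono _ (by gcongr; exact Ioi_subset_Ici_self))
  have hy : Tendsto (fun p : ℝ × ℝ × ℝ => p.2.2)
      (𝓝[Ico 0 T ×ˢ ((univ : Set ℝ) ×ˢ Ioi 0)] (t, x₀, 0)) (𝓝 0) :=
    (continuous_snd.comp continuous_snd).continuousAt.tendsto.mono_left nhdsWithin_le_nhds
  have hxx := ((((((((hbdry hh_cont).sub (hbdry hut_cont)).sub ((hbdry hu_cont).const_mul ϱ)).sub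
      (((tendsto_const_nhds (x := c)).add (hy.const_mul d)).mul (hbdry hux_cont))).sub
      (((tendsto_const_nhds (x := a)).sub (hy.const_mul b)).mul (hbdry huy_cont))).sub
      ((hlim_xy t ht x₀).const_mul (ρ * lam * sig))).sub
      ((hlim_yy t ht x₀).const_mul (sig ^ 2 / 2))).const_mul (2 / lam ^ 2)).congr'
    (f₂ := fun p : ℝ × ℝ × ℝ =>
      p.2.2 * deriv (fun x' => deriv (fun x'' => u p.1 x'' p.2.2) x') p.2.1) <| by
    filter_upwards [self_mem_nhdsWithin] with p ⟨hp, _, hp₀⟩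
    have hpde_p := hpde p.1 hp p.2.1 p.2.2 hp₀
    unfold Lop at hpde_p
    field_simp
    linear_combination (-2 : ℝ) * hpde_p
  have hbdd := ((hbdry hux_cont).comp (tendsto_slice_nhdsWithin ht)).abs.eventually_lt_const
    (lt_add_one _)
  have hL := eq_zero_of_tendsto_mul_deriv_deriv (v := u t) (hbdd.mono fun _ => le_of_lt)
    (hxx.comp (tendsto_slice_nhdsWithin ht))
  have hlam2 : lam ^ 2 ≠ 0 := by positivity
  simp only [mul_zero, add_zero, sub_zero, mul_eq_zero, div_eq_zero_iff, hlam2, two_ne_zero,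
    or_self, false_or] at hL
  linarith

/-- if `u` solves `∂_t u = −(ℒ+ϱ)u + h` for `y > 0`, the quantities
`y∂²_y u` and `y∂_x∂_y u` vanish in the limit at boundary points, and `u, ∂_t u,
∂_x u, ∂_y u, h` extend continuously to `{y = 0}`, then the boundary equation
`∂_t u + (c∂_x + a∂_y + ϱ)u = h` holds pointwise at `y = 0` for all `t ∈ [0,T)`. -/
theorem stmt3 (T a lam sig b c d ρ ϱ : ℝ) (hT : 0 < T) (ha : 0 < a) (hlam : 0 < lam)
    (hsig : 0 < sig) (hρ : -1 < ρ ∧ ρ < 1)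
    (u h : ℝ → ℝ → ℝ → ℝ)
    (hu_cont : ContinuousOn (fun p : ℝ × ℝ × ℝ => u p.1 p.2.1 p.2.2)
      (Ico 0 T ×ˢ ((univ : Set ℝ) ×ˢ Ici 0)))
    (hut_cont : ContinuousOn (fun p : ℝ × ℝ × ℝ => deriv (fun s => u s p.2.1 p.2.2) p.1)
      (Ico 0 T ×ˢ ((univ : Set ℝ) ×ˢ Ici 0)))
    (hh_cont : ContinuousOn (fun p : ℝ × ℝ × ℝ => h p.1 p.2.1 p.2.2)
      (Ico 0 T ×ˢ ((univ : Set ℝ) ×ˢ Ici 0)))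
    (hux_cont : ContinuousOn (fun p : ℝ × ℝ × ℝ => deriv (fun x' => u p.1 x' p.2.2) p.2.1)
      (Ico 0 T ×ˢ ((univ : Set ℝ) ×ˢ Ici 0)))
    (huy_cont : ContinuousOn (fun p : ℝ × ℝ × ℝ => deriv (fun y' => u p.1 p.2.1 y') p.2.2)
      (Ico 0 T ×ˢ ((univ : Set ℝ) ×ˢ Ici 0)))
    (hpde : ∀ t ∈ Ico 0 T, ∀ x y : ℝ, 0 < y →
      deriv (fun s => u s x y) t
        = -(Lop a b c d lam sig ρ (fun x' y' => u t x' y') x y + ϱ * u t x y) + h t x y)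
    (hlim_yy : ∀ t₀ ∈ Ico 0 T, ∀ x₀ : ℝ,
      Tendsto (fun p : ℝ × ℝ × ℝ =>
          p.2.2 * deriv (fun y' => deriv (fun y'' => u p.1 p.2.1 y'') y') p.2.2)
        (nhdsWithin (t₀, x₀, 0) (Ico 0 T ×ˢ ((univ : Set ℝ) ×ˢ Ioi 0))) (nhds 0))
    (hlim_xy : ∀ t₀ ∈ Ico 0 T, ∀ x₀ : ℝ,
      Tendsto (fun p : ℝ × ℝ × ℝ =>
          p.2.2 * deriv (fun x' => deriv (fun y' => u p.1 x' y') p.2.2) p.2.1)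
        (nhdsWithin (t₀, x₀, 0) (Ico 0 T ×ˢ ((univ : Set ℝ) ×ˢ Ioi 0))) (nhds 0)) :
    ∀ t ∈ Ico 0 T, ∀ x : ℝ,
      deriv (fun s => u s x 0) t
        + (c * deriv (fun x' => u t x' 0) x + a * deriv (fun y' => u t x y') 0 + ϱ * u t x 0)
      = h t x 0 :=
  stmt3_general T a lam sig b c d ρ ϱ hlam u h hu_cont hut_cont hh_cont hux_cont huy_cont hpde
    hlim_yy hlim_xy
end

section
/- Let 𝒜 ⊆ ℝ^M, Φ upper semicontinuous on 𝒜, Ψ lower semicontinuous on 𝒜 with Ψ ≥ 0, set M_α = sup_{x∈𝒜}(Φ(x) − αΨ(x)) for α > 0, and assume lim_{α→∞} M_α exists in ℝ. Choose x_α ∈ 𝒜 with M_α − (Φ(x_α) − αΨ(x_α)) → 0 as α → ∞. Then: (i) αΨ(x_α) → 0 as α → ∞; (ii) if x̂ ∈ 𝒜 is a limit point of (x_α), then Ψ(x̂) = 0 and lim_{α→∞} M_α = Φ(x̂) = sup{Φ(x) : x ∈ 𝒜, Ψ(x) = 0}. -/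
open Set Filter

/-- the doubling-of-variables lemma (Crandall–Ishii–Lions, Prop 3.7).
With `M_α = sup_{𝒜}(Φ − αΨ)` converging to a finite limit and `x_α` near-maximizers:
(i) `αΨ(x_α) → 0`; (ii) every limit point `x̂` of `(x_α)` satisfies `Ψ(x̂) = 0`,
`lim M_α = Φ(x̂)` and `Φ(x̂) = sup{Φ(x) : x ∈ 𝒜, Ψ(x) = 0}`. -/
theorem stmt7 (M : ℕ) (A : Set (Fin M → ℝ)) (hA : A.Nonempty)
    (Φ Ψ : (Fin M → ℝ) → ℝ)
    (hΦ : UpperSemicontinuousOn Φ A) (hΨ : LowerSemicontinuousOn Ψ A)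
    (hΨ0 : ∀ z ∈ A, 0 ≤ Ψ z)
    (Mα : ℝ → ℝ) (hMα : ∀ α : ℝ, Mα α = sSup ((fun z => Φ z - α * Ψ z) '' A))
    (hbdd : ∀ α : ℝ, 0 < α → BddAbove ((fun z => Φ z - α * Ψ z) '' A))
    (l : ℝ) (hlim : Tendsto Mα atTop (nhds l))
    (xα : ℝ → (Fin M → ℝ)) (hxα : ∀ α : ℝ, xα α ∈ A)
    (happrox : Tendsto (fun α => Mα α - (Φ (xα α) - α * Ψ (xα α))) atTop (nhds 0)) :
    Tendsto (fun α => α * Ψ (xα α)) atTop (nhds 0) ∧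
    ∀ xh ∈ A, MapClusterPt xh atTop xα →
      Ψ xh = 0 ∧ l = Φ xh ∧ Φ xh = sSup (Φ '' {z | z ∈ A ∧ Ψ z = 0}) := by

  -- Part (i)
  have hMhalf : Tendsto (fun α => Mα (α / 2)) atTop (nhds l) :=
    hlim.comp (tendsto_id.atTop_div_const two_pos)
  have key : ∀ α : ℝ, 0 < α →
      α * Ψ (xα α) ≤ 2 * (Mα (α/2) - Mα α + (Mα α - (Φ (xα α) - α * Ψ (xα α)))) := by
    intro α hα
    have h1 : Φ (xα α) - (α/2) * Ψ (xα α) ≤ Mα (α/2) := by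
      rw [hMα]
      exact le_csSup (hbdd _ (by linarith)) ⟨xα α, hxα α, rfl⟩
    linarith
  have hg : Tendsto (fun α => 2 * (Mα (α/2) - Mα α + (Mα α - (Φ (xα α) - α * Ψ (xα α)))))
      atTop (nhds 0) := by
    have h := ((hMhalf.sub hlim).add happrox).const_mul (2 : ℝ)
    simpa using h
  have part1 : Tendsto (fun α => α * Ψ (xα α)) atTop (nhds 0) := by
    refine tendsto_of_tendsto_of_tendsto_of_le_of_le' tendsto_const_nhds hg ?_ ?_
    · filter_upwards [eventually_gt_atTop (0:ℝ)] with α hα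
      exact mul_nonneg hα.le (hΨ0 _ (hxα α))
    · filter_upwards [eventually_gt_atTop (0:ℝ)] with α hα
      exact key α hα
  -- upper bound lemma
  have hub : ∀ z ∈ A, Ψ z = 0 → Φ z ≤ l := by
    intro z hz hzΨ
    have h1 : ∀ᶠ α : ℝ in atTop, Φ z ≤ Mα α := by
      filter_upwards [eventually_gt_atTop (0:ℝ)] with α hα
      have h2 : Φ z - α * Ψ z ≤ Mα α := by
        rw [hMα]; exact le_csSup (hbdd α hα) ⟨z, hz, rfl⟩
      simpa [hzΨ] using h2
    exact ge_of_tendsto hlim h1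
  refine ⟨part1, ?_⟩
  intro xh hxh hcl
  set L : Filter ℝ := atTop ⊓ comap xα (nhds xh) with hLdef
  have hLne : L.NeBot := by
    have h1 : (nhds xh ⊓ map xα atTop).NeBot := hcl
    have h2 : (map xα atTop ⊓ nhds xh).NeBot := by rwa [inf_comm] at h1
    rw [← Filter.push_pull] at h2
    exact (Filter.map_neBot_iff xα).mp h2
  have hL1 : Tendsto (fun α : ℝ => α) L atTop := tendsto_id.mono_left inf_le_left
  have hLx : Tendsto xα L (nhds xh) := tendsto_comap.mono_left inf_le_right
  have hLxA : Tendsto xα L (nhdsWithin xh A) :=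
    tendsto_nhdsWithin_of_tendsto_nhds_of_eventually_within _ hLx
      (Eventually.of_forall fun α => hxα α)
  have hαΨL : Tendsto (fun α => α * Ψ (xα α)) L (nhds 0) := part1.mono_left inf_le_left
  have hinv : Tendsto (fun α : ℝ => α⁻¹) L (nhds 0) := tendsto_inv_atTop_zero.comp hL1
  have hΨL : Tendsto (fun α => Ψ (xα α)) L (nhds 0) := by
    have hmul : Tendsto (fun α => (α * Ψ (xα α)) * α⁻¹) L (nhds 0) := by
      simpa using hαΨL.mul hinv
    refine hmul.congr' ?_
    filter_upwards [(eventually_gt_atTop (0:ℝ)).filter_mono (inf_le_left : L ≤ atTop)]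
      with α hα
    field_simp
  have hΨxh : Ψ xh = 0 := by
    by_contra h
    have hpos : 0 < Ψ xh := lt_of_le_of_ne (hΨ0 xh hxh) (Ne.symm h)
    have hev : ∀ᶠ α in L, Ψ xh / 2 < Ψ (xα α) :=
      hLxA.eventually (hΨ xh hxh (Ψ xh / 2) (by linarith))
    have hle : Ψ xh / 2 ≤ 0 := ge_of_tendsto hΨL (hev.mono fun α h' => h'.le)
    linarith
  have hMl : Tendsto Mα L (nhds l) := hlim.mono_left inf_le_left
  have happL : Tendsto (fun α => Mα α - (Φ (xα α) - α * Ψ (xα α))) L (nhds 0) :=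
    happrox.mono_left inf_le_left
  have hΦL : Tendsto (fun α => Φ (xα α)) L (nhds l) := by
    have h := (hMl.sub happL).add hαΨL
    have h2 : Tendsto (fun α => Φ (xα α)) L (nhds (l - 0 + 0)) := h.congr (fun α => by ring)
    simpa using h2
  have hle1 : l ≤ Φ xh := by
    by_contra h
    push_neg at h
    have hev : ∀ᶠ α in L, Φ (xα α) < (Φ xh + l) / 2 :=
      hLxA.eventually (hΦ xh hxh ((Φ xh + l) / 2) (by linarith))
    have hle : l ≤ (Φ xh + l) / 2 := le_of_tendsto hΦL (hev.mono fun α h' => h'.le)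
    linarith
  have hlΦ : l = Φ xh := le_antisymm hle1 (hub xh hxh hΨxh)
  refine ⟨hΨxh, hlΦ, ?_⟩
  have hset : Φ xh ∈ Φ '' {z | z ∈ A ∧ Ψ z = 0} := ⟨xh, ⟨hxh, hΨxh⟩, rfl⟩
  have hBdd : BddAbove (Φ '' {z | z ∈ A ∧ Ψ z = 0}) := by
    refine ⟨l, ?_⟩
    rintro _ ⟨z, ⟨hz, hzΨ⟩, rfl⟩
    exact hub z hz hzΨ
  refine le_antisymm (le_csSup hBdd hset) (csSup_le ⟨_, hset⟩ ?_)
  rintro _ ⟨z, ⟨hz, hzΨ⟩, rfl⟩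
  calc Φ z ≤ l := hub z hz hzΨ
    _ = Φ xh := hlΦ
end
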